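/- Let k ≥ 1 be an integer. A multiset S with elements in Z_2^k is reduced if and only if S is a set of linearly independent vectors of Z_2^k viewed as a vector space over F_2 (in particular each element has multiplicity one). Consequently, h_2(k) = k. -/

import Mathlib

/-- The sumset `Σ(S)` of a multiset `S` with elements in an abelian group:
the set of all sums of submultisets of `S` (the empty sum being `0`). -/
def sumset {A : Type*} [AddCommGroup A] [DecidableEq A] (S : Multiset A) : Finset A :=
  (S.powerset.map Multiset.sum).toFinset

/-- A multiset `S` is reduced if removing one copy of any of its elements strictly
decreases the size of its sumset. -/
def IsReducedMultiset {A : Type*} [AddCommGroup A] [DecidableEq A] (S : Multiset A) : Prop :=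
  ∀ s ∈ S, (sumset (S - {s})).card < (sumset S).card

/-- `h_p(k)`: the largest size of a reduced multiset with elements in `ℤ_p^k`. -/
noncomputable def hmax (p k : ℕ) : ℕ :=
  sSup {n : ℕ | ∃ S : Multiset (Fin k → ZMod p), IsReducedMultiset S ∧ Multiset.card S = n}

/-!
Over `𝔽₂` every coefficient is `0` or `1`, so the sums of submultisets of `S` are exactly the
`𝔽₂`-linear combinations of its elements: `Σ(S)` is the span of `S`. Removing a copy of `s`
only shrinks the sumset, so `S` is reduced iff no `s ∈ S` lies in the span of `S - {s}`. A repeated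
element lies in that span, and for a set this is linear independence. Linearly independent sets
have at most `k` elements, and the standard basis has exactly `k`.
-/

open Submodule

section sumset

variable {A : Type*} [AddCommGroup A] [DecidableEq A]

theorem mem_sumset {S : Multiset A} {x : A} : x ∈ sumset S ↔ ∃ t ≤ S, t.sum = x := by
  simp [sumset, Multiset.mem_powerset]

theorem sumset_mono {S T : Multiset A} (h : S ≤ T) : sumset S ⊆ sumset T := fun _ hx => by
  obtain ⟨t, ht, rfl⟩ := mem_sumset.mp hx
  exact mem_sumset.mpr ⟨t, ht.trans h, rfl⟩

theorem isReducedMultiset_iff_not_subset {S : Multiset A} :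
    IsReducedMultiset S ↔ ∀ s ∈ S, ¬ sumset S ⊆ sumset (S.erase s) := by
  refine forall₂_congr fun s _ => ?_
  have hsub : sumset (S.erase s) ⊆ sumset S := sumset_mono (Multiset.erase_le s S)
  rw [Multiset.sub_singleton]
  constructor
  · intro hlt hsup
    exact hlt.ne (congrArg Finset.card (hsub.antisymm hsup))
  · intro hnot
    exact Finset.card_lt_card ⟨hsub, hnot⟩

end sumset

section ZModTwo

variable {M : Type*} [AddCommGroup M] [Module (ZMod 2) M] [DecidableEq M]

theorem coe_sumset_eq_span (S : Multiset M) :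
    (sumset S : Set M) = span (ZMod 2) (S.toFinset : Set M) := by
  ext x
  rw [Finset.mem_coe, mem_sumset, SetLike.mem_coe]
  constructor
  · rintro ⟨t, ht, rfl⟩
    exact multiset_sum_mem _ fun y hy => subset_span (by simpa using Multiset.mem_of_le ht hy)
  · intro hx
    obtain ⟨f, -, rfl⟩ := mem_span_finset.mp hx
    -- each coefficient is `0` or `1`; keep the elements with coefficient `1`
    refine ⟨(S.toFinset.filter (f · = 1)).val,
      (Multiset.filter_le _ _).trans (Multiset.dedup_le S), ?_⟩
    rw [Finset.sum_val, Finset.sum_filter]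
    refine Finset.sum_congr rfl fun y _ => ?_
    rcases (by decide : ∀ a : ZMod 2, a = 0 ∨ a = 1) (f y) with h | h <;> simp [h]

theorem isReducedMultiset_iff_notMem_span {S : Multiset M} :
    IsReducedMultiset S ↔ ∀ s ∈ S, s ∉ span (ZMod 2) ((S.erase s).toFinset : Set M) := by
  rw [isReducedMultiset_iff_not_subset]
  refine forall₂_congr fun s hs => not_congr ?_
  rw [← Finset.coe_subset, coe_sumset_eq_span, coe_sumset_eq_span, SetLike.coe_subset_coe,
    ← Multiset.cons_erase hs, Multiset.toFinset_cons, Finset.coe_insert, span_insert,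
    Multiset.erase_cons_head, sup_le_iff, span_singleton_le_iff_mem]
  exact and_iff_left le_rfl

theorem IsReducedMultiset.nodup {S : Multiset M} (hS : IsReducedMultiset S) : S.Nodup := by
  rw [Multiset.nodup_iff_count_le_one]
  by_contra! ⟨s, hs⟩
  have hs_erase : s ∈ S.erase s := by
    rw [← Multiset.count_pos, Multiset.count_erase_self]
    omega
  exact isReducedMultiset_iff_notMem_span.mp hS s (Multiset.count_pos.mp (by omega))
    (subset_span (by simpa using hs_erase))

theorem isReducedMultiset_iff_linearIndepOn_of_nodup {S : Multiset M} (hS : S.Nodup) :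
    IsReducedMultiset S ↔ LinearIndepOn (ZMod 2) id (S.toFinset : Set M) := by
  have herase : ∀ s, ((S.erase s).toFinset : Set M) = id '' ((S.toFinset : Set M) \ {s}) := by
    intro s
    ext x
    simp [hS.mem_erase_iff, and_comm]
  rw [isReducedMultiset_iff_notMem_span, linearIndepOn_iff_notMem_span]
  simp only [Finset.mem_coe, Multiset.mem_toFinset, herase, id]

theorem isReducedMultiset_iff_nodup_and_linearIndepOn {S : Multiset M} :
    IsReducedMultiset S ↔ S.Nodup ∧ LinearIndepOn (ZMod 2) id (S.toFinset : Set M) :=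
  ⟨fun hS => ⟨hS.nodup, (isReducedMultiset_iff_linearIndepOn_of_nodup hS.nodup).mp hS⟩,
    fun ⟨hS, hli⟩ => (isReducedMultiset_iff_linearIndepOn_of_nodup hS).mpr hli⟩

theorem IsReducedMultiset.card_le_finrank [Module.Finite (ZMod 2) M] {S : Multiset M}
    (hS : IsReducedMultiset S) : Multiset.card S ≤ Module.finrank (ZMod 2) M := by
  obtain ⟨hnd, hli⟩ := isReducedMultiset_iff_nodup_and_linearIndepOn.mp hS
  rw [← Multiset.toFinset_card_of_nodup hnd]
  exact hli.finset_card_le_finrank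

theorem exists_isReducedMultiset_card_eq_finrank [Module.Finite (ZMod 2) M] :
    ∃ S : Multiset M, IsReducedMultiset S ∧ Multiset.card S = Module.finrank (ZMod 2) M := by
  let b := Module.finBasis (ZMod 2) M
  refine ⟨(Finset.univ.image b).val, ?_, ?_⟩
  · rw [isReducedMultiset_iff_nodup_and_linearIndepOn, Finset.val_toFinset, Finset.coe_image,
      Finset.coe_univ, Set.image_univ, linearIndepOn_id_range_iff b.injective]
    exact ⟨(Finset.univ.image b).nodup, b.linearIndependent⟩
  · rw [Finset.card_val, Finset.card_image_of_injective _ b.injective, Finset.card_univ,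
      Fintype.card_fin]

end ZModTwo

theorem reduced_iff_linearIndependent_general (k : ℕ) :
    (∀ S : Multiset (Fin k → ZMod 2), IsReducedMultiset S ↔
      (S.Nodup ∧ LinearIndependent (ZMod 2)
        (fun x : (S.toFinset : Set (Fin k → ZMod 2)) => (x : Fin k → ZMod 2)))) ∧
    hmax 2 k = k := by
  refine ⟨fun _ => isReducedMultiset_iff_nodup_and_linearIndepOn, IsGreatest.csSup_eq ?_⟩
  obtain ⟨S, hS, hcard⟩ := exists_isReducedMultiset_card_eq_finrank (M := Fin k → ZMod 2)
  refine ⟨⟨S, hS, hcard.trans (Module.finrank_fin_fun _)⟩, ?_⟩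
  rintro _ ⟨T, hT, rfl⟩
  exact hT.card_le_finrank.trans_eq (Module.finrank_fin_fun _)

/-- A multiset `S` with elements in `ℤ_2^k` is reduced if and only if it is a set
(each element has multiplicity one) of linearly independent vectors of `ℤ_2^k`
viewed as a vector space over `𝔽_2`. Consequently, `h_2(k) = k`. -/
theorem reduced_iff_linearIndependent (k : ℕ) (hk : 1 ≤ k) :
    (∀ S : Multiset (Fin k → ZMod 2), IsReducedMultiset S ↔
      (S.Nodup ∧ LinearIndependent (ZMod 2)
        (fun x : (S.toFinset : Set (Fin k → ZMod 2)) => (x : Fin k → ZMod 2)))) ∧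
    hmax 2 k = k :=
  reduced_iff_linearIndependent_general k
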